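/- arXiv:2503.00954 — 5 statements merged into one kernel-verified Lean document; each statement's English description precedes it below -/
import Mathlib

section
/- Let p be a prime and G a finite non-abelian p-group which is an internal direct product G = H × K of normal subgroups, where H is nontrivial abelian and K is non-abelian. Then G admits a central automorphism α of order p (α ∈ Aut(G) with g⁻¹α(g) ∈ Z(G) for all g) which is not inner. -/
lemma aux_exists_orderOf_eq_prime {p : ℕ} (hp : p.Prime) {G : Type*} [Group G]
    (hpG : IsPGroup p G) {g : G} (hg : g ≠ 1) :
    ∃ z : G, z ∈ Subgroup.zpowers g ∧ orderOf z = p := by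
  haveI := Fact.mk hp
  obtain ⟨m, hm⟩ := IsPGroup.iff_orderOf.mp hpG g
  have hm0 : m ≠ 0 := by
    rintro rfl
    rw [pow_zero, orderOf_eq_one_iff] at hm
    exact hg hm
  refine ⟨g ^ p ^ (m - 1), Subgroup.pow_mem _ (Subgroup.mem_zpowers g) _, ?_⟩
  rw [orderOf_pow' g (pow_pos hp.pos (m - 1)).ne', hm, Nat.gcd_eq_right (pow_dvd_pow p (Nat.sub_le m 1)),
    Nat.pow_div (Nat.sub_le m 1) hp.pos]
  have : m - (m - 1) = 1 := by omega
  rw [this, pow_one]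

lemma aux_exists_normal_index {p : ℕ} (hp : p.Prime) {Q : Type*} [Group Q] [Finite Q]
    [Nontrivial Q] (hpQ : IsPGroup p Q) :
    ∃ M : Subgroup Q, M.Normal ∧ M.index = p := by
  haveI := Fact.mk hp
  haveI := hpQ.isNilpotent
  have hbt : (⊥ : Subgroup Q) ≠ ⊤ := by
    obtain ⟨x, hx⟩ := exists_ne (1 : Q)
    intro h
    exact hx ((Subgroup.mem_bot).mp (h ▸ Subgroup.mem_top x))
  obtain ⟨M, hM, -⟩ := (eq_top_or_exists_le_coatom (⊥ : Subgroup Q)).resolve_left hbt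
  have hMn : M.Normal := Subgroup.NormalizerCondition.normal_of_coatom M (normalizerCondition_of_isNilpotent (G := Q)) hM
  haveI := hMn
  refine ⟨M, hMn, ?_⟩
  -- the quotient R
  set R := Q ⧸ M with hR
  have hpR : IsPGroup p R := hpQ.to_quotient M
  -- every subgroup of R is ⊥ or ⊤
  have hsub : ∀ S : Subgroup R, S = ⊥ ∨ S = ⊤ := by
    intro S
    have hMle : M ≤ S.comap (QuotientGroup.mk' M) := by
      intro m hm
      simp only [Subgroup.mem_comap, QuotientGroup.mk'_apply]
      have : ((m : Q) : R) = 1 := (QuotientGroup.eq_one_iff m).mpr hm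
      rw [this]; exact S.one_mem
    rcases hMle.lt_or_eq with hlt | heq
    · right
      have := hM.2 _ hlt
      rw [← Subgroup.map_comap_eq_self_of_surjective (QuotientGroup.mk'_surjective M) S, this]
      exact Subgroup.map_top_of_surjective _ (QuotientGroup.mk'_surjective M)
    · left
      rw [← Subgroup.map_comap_eq_self_of_surjective (QuotientGroup.mk'_surjective M) S, ← heq]
      rw [eq_bot_iff]
      rintro x ⟨m, hm, rfl⟩
      simp only [Subgroup.mem_bot, QuotientGroup.mk'_apply]
      exact (QuotientGroup.eq_one_iff m).mpr hm
  -- R is nontrivial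
  have hRnt : Nontrivial R := by
    obtain ⟨q, hq⟩ : ∃ q : Q, q ∉ M := by
      by_contra h
      push_neg at h
      exact hM.1 (((Subgroup.eq_top_iff' M).mpr h))
    exact ⟨⟨(q : R), 1, fun h => hq ((QuotientGroup.eq_one_iff q).mp h)⟩⟩
  obtain ⟨r, hr⟩ := exists_ne (1 : R)
  obtain ⟨z, -, hz⟩ := aux_exists_orderOf_eq_prime hp hpR hr
  have hzne : z ≠ 1 := by
    intro h; rw [h, orderOf_one] at hz; exact hp.one_lt.ne' hz.symm
  have hzt : Subgroup.zpowers z = ⊤ :=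
    (hsub _).resolve_left (by simpa [Subgroup.zpowers_eq_bot] using hzne)
  have hcard : Nat.card R = p := by
    rw [← Nat.card_zpowers z] at hz
    rw [← hz]
    exact (Nat.card_congr (Equiv.subtypeUnivEquiv (fun x => by rw [hzt]; exact Subgroup.mem_top x))).symm
  rw [Subgroup.index, hcard]

/-- A finite non-abelian p-group with a nontrivial abelian direct factor (and
non-abelian complement) has a non-inner central automorphism of order p. -/
theorem noninner_central_aut_of_abelian_factor {p : ℕ} (hp : p.Prime)
    {G : Type*} [Group G] [Fintype G] (hpG : IsPGroup p G)
    (hG : ∃ a b : G, a * b ≠ b * a)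
    (H K : Subgroup G) (hHn : H.Normal) (hKn : K.Normal)
    (hsup : H ⊔ K = ⊤) (hinf : H ⊓ K = ⊥)
    (hHnt : H ≠ ⊥) (hHab : ∀ a ∈ H, ∀ b ∈ H, a * b = b * a)
    (hKnab : ∃ a ∈ K, ∃ b ∈ K, a * b ≠ b * a) :
    ∃ α : G ≃* G, (∀ g : G, g⁻¹ * α g ∈ Subgroup.center G) ∧
      orderOf α = p ∧ ¬ ∃ x : G, ∀ g : G, α g = x⁻¹ * g * x := by
  haveI := Fact.mk hp
  haveI := hHn
  have hdis : Disjoint H K := disjoint_iff.mpr hinf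
  -- H is central
  have hHZ : H ≤ Subgroup.center G := by
    intro h hh
    rw [Subgroup.mem_center_iff]
    intro g
    have hg : g ∈ H ⊔ K := by rw [hsup]; trivial
    have hle : H ⊔ K ≤ Subgroup.centralizer {h} := by
      apply sup_le
      · intro a ha
        rw [Subgroup.mem_centralizer_iff]
        rintro y hy
        rw [show y = h from hy]
        exact hHab h hh a ha
      · intro a ha
        rw [Subgroup.mem_centralizer_iff]
        rintro y hy
        rw [show y = h from hy]
        exact Subgroup.commute_of_normal_of_disjoint H K hHn hKn hdis h a hh ha
    have hc := hle hg
    rw [Subgroup.mem_centralizer_iff] at hc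
    exact (hc h rfl).symm
  -- H is proper
  have hHneqtop : H ≠ ⊤ := by
    intro htop
    rw [htop, top_inf_eq] at hinf
    obtain ⟨a, ha, b, hb, hab⟩ := hKnab
    rw [hinf, Subgroup.mem_bot] at ha hb
    rw [ha, hb] at hab
    exact hab rfl
  -- an element z of order p in H
  obtain ⟨h₀, hh₀H, hh₀⟩ : ∃ x ∈ H, x ≠ 1 := by
    by_contra hcon
    push_neg at hcon
    exact hHnt ((Subgroup.eq_bot_iff_forall H).mpr hcon)
  obtain ⟨z, hzmem, hzord⟩ := aux_exists_orderOf_eq_prime hp hpG hh₀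
  have hzH : z ∈ H := (Subgroup.zpowers_le.mpr hh₀H) hzmem
  -- a normal subgroup M of index p containing H
  haveI : Nontrivial (G ⧸ H) := by
    obtain ⟨g, hg⟩ : ∃ g : G, g ∉ H := by
      by_contra hcon
      push_neg at hcon
      exact hHneqtop ((Subgroup.eq_top_iff' H).mpr hcon)
    exact ⟨⟨(g : G ⧸ H), 1, fun h => hg ((QuotientGroup.eq_one_iff g).mp h)⟩⟩
  obtain ⟨M', hM'n, hM'i⟩ := aux_exists_normal_index hp (hpG.to_quotient H)
  haveI := hM'n
  set M : Subgroup G := M'.comap (QuotientGroup.mk' H) with hMdef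
  have hMn : M.Normal := Subgroup.Normal.comap hM'n _
  haveI := hMn
  have hMi : M.index = p := by
    rw [show M.index = M'.index from Subgroup.index_comap_of_surjective M' (QuotientGroup.mk'_surjective H), hM'i]
  have hHM : H ≤ M := by
    intro a ha
    rw [hMdef, Subgroup.mem_comap]
    have h1 : (QuotientGroup.mk' H) a = 1 := (QuotientGroup.eq_one_iff a).mpr ha
    rw [h1]
    exact M'.one_mem
  -- the homomorphism f : G → G through G⧸M into ⟨z⟩
  have hcardQM : Nat.card (G ⧸ M) = p := hMi
  haveI : IsCyclic (G ⧸ M) := isCyclic_of_prime_card hcardQM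
  have hcardZ : Nat.card (Subgroup.zpowers z) = p := by rw [Nat.card_zpowers, hzord]
  haveI : IsCyclic (Subgroup.zpowers z) := isCyclic_of_prime_card hcardZ
  let ψ : (G ⧸ M) ≃* (Subgroup.zpowers z) := mulEquivOfCyclicCardEq (by rw [hcardQM, hcardZ])
  let f : G →* G := ((Subgroup.zpowers z).subtype.comp ψ.toMonoidHom).comp (QuotientGroup.mk' M)
  have hfval : ∀ g : G, f g = ((ψ (QuotientGroup.mk' M g) : Subgroup.zpowers z) : G) := fun g => rfl
  have hfM : ∀ a ∈ M, f a = 1 := by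
    intro a ha
    have h1 : (QuotientGroup.mk' M) a = 1 := (QuotientGroup.eq_one_iff a).mpr ha
    rw [hfval, h1, map_one]
    rfl
  have hfmemH : ∀ g : G, f g ∈ H := fun g =>
    (Subgroup.zpowers_le.mpr hzH) (ψ (QuotientGroup.mk' M g)).2
  have hfc : ∀ g : G, f g ∈ Subgroup.center G := fun g => hHZ (hfmemH g)
  have hfp : ∀ g : G, f g ^ p = 1 := by
    intro g
    have h1 : (ψ (QuotientGroup.mk' M g)) ^ p = 1 := by
      have := pow_card_eq_one' (G := Subgroup.zpowers z) (x := ψ (QuotientGroup.mk' M g))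
      rwa [hcardZ] at this
    rw [hfval]
    calc ((ψ (QuotientGroup.mk' M g) : Subgroup.zpowers z) : G) ^ p
        = (((ψ (QuotientGroup.mk' M g)) ^ p : Subgroup.zpowers z) : G) := by push_cast; ring_nf
      _ = 1 := by rw [h1]; rfl
  have hff : ∀ g : G, f (f g) = 1 := fun g => hfM _ (hHM (hfmemH g))
  -- f is nontrivial
  obtain ⟨g₀, hg₀⟩ : ∃ g : G, f g ≠ 1 := by
    have hMne : M ≠ ⊤ := by
      intro htop
      rw [htop, Subgroup.index_top] at hMi
      exact hp.one_lt.ne' hMi.symm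
    obtain ⟨g, hg⟩ : ∃ g : G, g ∉ M := by
      by_contra hcon
      push_neg at hcon
      exact hMne ((Subgroup.eq_top_iff' M).mpr hcon)
    refine ⟨g, fun hfg => hg ?_⟩
    have h1 : ψ (QuotientGroup.mk' M g) = 1 := by
      apply Subtype.ext
      rw [← hfval g, hfg]
      rfl
    have h2 : QuotientGroup.mk' M g = 1 := ψ.injective (by rw [h1, map_one])
    exact (QuotientGroup.eq_one_iff g).mp h2
  -- the automorphism
  have key : ∀ g : G, f (g * f g) = f g := fun g => by rw [map_mul, hff g, mul_one]
  let e : Equiv.Perm G :=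
    { toFun := fun g => g * f g
      invFun := fun g => g * (f g)⁻¹
      left_inv := fun g => by
        show (g * f g) * (f (g * f g))⁻¹ = g
        rw [key, mul_inv_cancel_right]
      right_inv := fun g => by
        show (g * (f g)⁻¹) * f (g * (f g)⁻¹) = g
        have : f (g * (f g)⁻¹) = f g := by rw [map_mul, map_inv, hff g, inv_one, mul_one]
        rw [this, inv_mul_cancel_right] }
  let α : G ≃* G := MulEquiv.mk' e (by
    intro a b
    show (a * b) * f (a * b) = (a * f a) * (b * f b)
    rw [map_mul]
    have hc : b * f a = f a * b := Subgroup.mem_center_iff.mp (hfc a) b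
    calc a * b * (f a * f b) = a * (b * f a) * f b := by group
      _ = a * (f a * b) * f b := by rw [hc]
      _ = (a * f a) * (b * f b) := by group)
  have hα : ∀ g : G, α g = g * f g := fun g => rfl
  refine ⟨α, ?_, ?_, ?_⟩
  · intro g
    rw [hα, inv_mul_cancel_left]
    exact hfc g
  · -- order p
    have hpow : ∀ (n : ℕ) (g : G), (α ^ n) g = g * f g ^ n := by
      intro n
      induction n with
      | zero => intro g; simp
      | succ n ih =>
        intro g
        rw [pow_succ, MulAut.mul_apply, hα, ih (g * f g), key, pow_succ', mul_assoc]
    have hαp : α ^ p = 1 := by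
      ext g
      rw [hpow p g, hfp g, mul_one]
      rfl
    have hαne : α ≠ 1 := by
      intro h1
      apply hg₀
      have := congrArg (fun β : G ≃* G => β g₀) h1
      simpa [hα g₀] using this
    exact orderOf_eq_prime hαp hαne
  · rintro ⟨x, hx⟩
    obtain ⟨k, hkK, hfk⟩ : ∃ k ∈ K, f k ≠ 1 := by
      by_contra hcon
      push_neg at hcon
      have hker : H ⊔ K ≤ f.ker :=
        sup_le (fun a ha => hfM a (hHM ha)) fun a ha => hcon a ha
      have : g₀ ∈ f.ker := hker (by rw [hsup]; trivial)
      exact hg₀ this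
    have h1 : k * f k = x⁻¹ * k * x := by rw [← hα k, hx k]
    have h2 : f k = k⁻¹ * (x⁻¹ * k * x) := by rw [← h1]; group
    have h3 : f k ∈ K := by
      rw [h2]
      refine K.mul_mem (K.inv_mem hkK) ?_
      have := hKn.conj_mem k hkK x⁻¹
      simpa [mul_assoc] using this
    have h4 : f k ∈ H ⊓ K := ⟨hfmemH k, h3⟩
    rw [hinf, Subgroup.mem_bot] at h4
    exact hfk h4
end

section
/- Let p be a prime and G a finite non-abelian p-group which is an internal direct product G = H × K of normal subgroups with H nontrivial abelian and K non-abelian. Then G has a non-inner automorphism of order p fixing the Frattini subgroup Φ(G) elementwise. -/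
/-!
The abelian factor `H` is central, and so is an element `z` of order `p` in `Z(K)`. Since `G / K`
is a nontrivial `p`-group, some normal subgroup `M ⊇ K` has index `p`; identifying `G / M` with
`⟨z⟩` gives a homomorphism `φ : G → ⟨z⟩` with kernel `M`, and `α g = g * φ g` is an automorphism
of order `p`. It fixes `M ⊇ Φ(G)` pointwise but moves the central elements of `H \ M`, which no
inner automorphism does.
-/

open Subgroup

namespace Subgroup

variable {G : Type*} [Group G]

lemma isCoatom_of_index_prime {N : Subgroup G} (hN : N.index.Prime) : IsCoatom N := by
  have : N.FiniteIndex := ⟨hN.ne_zero⟩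
  refine ⟨fun htop => hN.ne_one (index_eq_one.mpr htop), fun T hNT => ?_⟩
  have hlt := index_strictAnti hNT
  rcases hN.eq_one_or_self_of_dvd _ (index_dvd_of_le hNT.le) with h1 | hp
  · exact index_eq_one.mp h1
  · omega

lemma frattini_le_of_index_prime {N : Subgroup G} (hN : N.index.Prime) : frattini G ≤ N :=
  frattini_le_coatom (isCoatom_of_index_prime hN)

lemma mem_center_of_sup_eq_top {H K : Subgroup G} (hHn : H.Normal) (hKn : K.Normal)
    (hdisj : Disjoint H K) (hsup : H ⊔ K = ⊤) {x : G} (hx : x ∈ H)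
    (hxH : ∀ h ∈ H, x * h = h * x) : x ∈ center G := by
  have hle : H ⊔ K ≤ centralizer {x} := by
    refine sup_le (fun h hh => ?_) (fun k hk => ?_) <;> rw [mem_centralizer_singleton_iff]
    · exact (hxH h hh).symm
    · exact (commute_of_normal_of_disjoint H K hHn hKn hdisj x k hx hk).eq.symm
  exact mem_center_iff.mpr fun g => mem_centralizer_singleton_iff.mp (hle (hsup ▸ mem_top g))

end Subgroup

namespace IsPGroup

variable {p : ℕ} [Fact p.Prime] {G : Type*} [Group G] [Finite G]

lemma exists_orderOf_eq_prime [Nontrivial G] (hG : IsPGroup p G) : ∃ g : G, orderOf g = p :=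
  exists_prime_orderOf_dvd_card' p (hG.card_eq_or_dvd.resolve_left Finite.one_lt_card.ne')

lemma exists_normal_index_eq_prime [Nontrivial G] (hG : IsPGroup p G) :
    ∃ N : Subgroup G, N.Normal ∧ N.index = p := by
  obtain ⟨n, hn, hcard⟩ := hG.nontrivial_iff_card.mp ‹_›
  obtain ⟨k, rfl⟩ := Nat.exists_eq_succ_of_ne_zero hn.ne'
  obtain ⟨N, hN⟩ := Sylow.exists_subgroup_card_pow_prime p (hcard ▸ pow_dvd_pow p k.le_succ)
  have hindex : N.index = p := by
    have := N.card_mul_index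
    rw [hN, hcard, pow_succ] at this
    exact mul_left_cancel₀ (pow_ne_zero k (Fact.out : p.Prime).ne_zero) this
  refine ⟨N, normal_of_index_eq_minFac_card ?_, hindex⟩
  rw [hindex, hcard, (Fact.out : p.Prime).pow_minFac k.succ_ne_zero]

lemma exists_normal_le_index_eq_prime {K : Subgroup G} [K.Normal] (hG : IsPGroup p G)
    (hK : K ≠ ⊤) :
    ∃ M : Subgroup G, M.Normal ∧ K ≤ M ∧ M.index = p := by
  have : Nontrivial (G ⧸ K) := QuotientGroup.nontrivial_iff.mpr hK
  obtain ⟨N, hNn, hN⟩ := (hG.to_quotient K).exists_normal_index_eq_prime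
  refine ⟨N.comap (QuotientGroup.mk' K), hNn.comap _, fun k hk => ?_, ?_⟩
  · simp [(QuotientGroup.eq_one_iff k).mpr hk, N.one_mem]
  · rw [index_comap_of_surjective _ (QuotientGroup.mk'_surjective K), hN]

end IsPGroup

namespace MulAut

variable {G : Type*} [Group G]

def ofCentralHom (φ : G →* G) (hcen : ∀ g, φ g ∈ center G) (hφφ : ∀ g, φ (φ g) = 1) :
    G ≃* G where
  toFun g := g * φ g
  invFun g := g * (φ g)⁻¹
  left_inv g := by simp [hφφ]
  right_inv g := by simp [hφφ]
  map_mul' a b := by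
    simp only [map_mul, mul_assoc, mul_right_inj]
    rw [← mul_assoc, mem_center_iff.mp (hcen a) b, mul_assoc]

variable (φ : G →* G) (hcen : ∀ g, φ g ∈ center G) (hφφ : ∀ g, φ (φ g) = 1)

@[simp]
lemma ofCentralHom_apply (g : G) : ofCentralHom φ hcen hφφ g = g * φ g := rfl

lemma ofCentralHom_pow_apply (n : ℕ) (g : G) :
    (ofCentralHom φ hcen hφφ ^ n) g = g * φ g ^ n := by
  induction n with
  | zero => simp
  | succ n ih => rw [pow_succ', mul_apply, ih, ofCentralHom_apply, map_mul, map_pow, hφφ, one_pow,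
      mul_one, mul_assoc, ← pow_succ]

lemma ofCentralHom_apply_eq_self_iff {g : G} : ofCentralHom φ hcen hφφ g = g ↔ g ∈ φ.ker := by
  simp

lemma orderOf_ofCentralHom {p : ℕ} [Fact p.Prime] (hpow : ∀ g, φ g ^ p = 1) (hφ : φ ≠ 1) :
    orderOf (ofCentralHom φ hcen hφφ) = p := by
  refine orderOf_eq_prime (MulEquiv.ext fun g => ?_) fun h => hφ (MonoidHom.ext fun g => ?_)
  · simp [ofCentralHom_pow_apply, hpow]
  · simpa using congr($h g)

lemma ofCentralHom_not_inner {g : G} (hg : g ∈ center G) (hφg : φ g ≠ 1) :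
    ¬ ∃ x : G, ∀ y : G, ofCentralHom φ hcen hφφ y = x⁻¹ * y * x := by
  rintro ⟨x, hx⟩
  have : ofCentralHom φ hcen hφφ g = g := by
    rw [hx, mem_center_iff.mp hg x⁻¹, mul_assoc, inv_mul_cancel, mul_one]
  exact hφg ((ofCentralHom_apply_eq_self_iff φ hcen hφφ).mp this)

end MulAut

section

variable {p : ℕ} [Fact p.Prime] {G : Type*} [Group G]

lemma exists_monoidHom_ker_eq_and_mem_zpowers {M : Subgroup G} [M.Normal] (hM : M.index = p)
    {z : G} (hz : orderOf z = p) : ∃ φ : G →* G, φ.ker = M ∧ ∀ g, φ g ∈ zpowers z := by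
  let e : G ⧸ M ≃* zpowers z :=
    mulEquivOfPrimeCardEq (M.index_eq_card ▸ hM) ((Nat.card_zpowers z).trans hz)
  refine ⟨(zpowers z).subtype.comp (e.toMonoidHom.comp (QuotientGroup.mk' M)), ?_,
    fun g => SetLike.coe_mem _⟩
  rw [MonoidHom.ker_comp_of_injective _ _ (zpowers z).subtype_injective,
    MonoidHom.ker_comp_of_injective _ _ e.injective, QuotientGroup.ker_mk']

theorem exists_noninner_mulAut_fixing_frattini {M : Subgroup G} [M.Normal] (hM : M.index = p)
    {z : G} (hz : z ∈ center G) (hzp : orderOf z = p) (hzM : z ∈ M)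
    {g : G} (hg : g ∈ center G) (hgM : g ∉ M) :
    ∃ α : G ≃* G, orderOf α = p ∧ (¬ ∃ x : G, ∀ y : G, α y = x⁻¹ * y * x) ∧
      ∀ w ∈ frattini G, α w = w := by
  obtain ⟨φ, hker, hφz⟩ := exists_monoidHom_ker_eq_and_mem_zpowers hM hzp
  have hcen (y : G) : φ y ∈ center G := zpowers_le.mpr hz (hφz y)
  have hφφ (y : G) : φ (φ y) = 1 := by rw [← φ.mem_ker, hker]; exact zpowers_le.mpr hzM (hφz y)
  have hpow (y : G) : φ y ^ p = 1 := by
    rw [← orderOf_dvd_iff_pow_eq_one, ← hzp]; exact orderOf_dvd_of_mem_zpowers (hφz y)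
  have hφg : φ g ≠ 1 := fun h => hgM (hker ▸ φ.mem_ker.mpr h)
  refine ⟨MulAut.ofCentralHom φ hcen hφφ,
    MulAut.orderOf_ofCentralHom φ hcen hφφ hpow fun h => hφg (by simp [h]),
    MulAut.ofCentralHom_not_inner φ hcen hφφ hg hφg, fun w hw => ?_⟩
  rw [MulAut.ofCentralHom_apply_eq_self_iff, hker]
  exact frattini_le_of_index_prime (hM ▸ Fact.out) hw

end

theorem noninner_aut_fixing_frattini_of_abelian_factor_general {p : ℕ} (hp : p.Prime)
    {G : Type*} [Group G] [Fintype G] (hpG : IsPGroup p G)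
    (H K : Subgroup G) (hHn : H.Normal) (hKn : K.Normal)
    (hsup : H ⊔ K = ⊤) (hinf : H ⊓ K = ⊥)
    (hHnt : H ≠ ⊥) (hHab : ∀ a ∈ H, ∀ b ∈ H, a * b = b * a)
    (hKnab : ∃ a ∈ K, ∃ b ∈ K, a * b ≠ b * a) :
    ∃ α : G ≃* G, orderOf α = p ∧ (¬ ∃ x : G, ∀ g : G, α g = x⁻¹ * g * x) ∧
      ∀ w ∈ frattini G, α w = w := by
  have : Fact p.Prime := ⟨hp⟩
  have hdisj : Disjoint H K := disjoint_iff.mpr hinf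
  have : Nontrivial K := by
    obtain ⟨a, ha, b, hb, hab⟩ := hKnab
    exact nontrivial_of_ne ⟨a, ha⟩ ⟨b, hb⟩ fun h => hab (by rw [Subtype.mk.inj h])
  have := (hpG.to_subgroup K).center_nontrivial
  obtain ⟨z, hzp⟩ := ((hpG.to_subgroup K).to_subgroup (center K)).exists_orderOf_eq_prime
  rw [← orderOf_coe, ← orderOf_coe] at hzp
  have hz : ((z : K) : G) ∈ center G :=
    mem_center_of_sup_eq_top hKn hHn hdisj.symm (sup_comm H K ▸ hsup) (z : K).2
      fun k hk => congrArg Subtype.val (mem_center_iff.mp z.2 ⟨k, hk⟩).symm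
  have hKtop : K ≠ ⊤ := fun h => hHnt (by simpa [h] using hinf)
  obtain ⟨M, hMn, hKM, hM⟩ := hpG.exists_normal_le_index_eq_prime hKtop
  obtain ⟨g, hgH, hgM⟩ : ∃ g ∈ H, g ∉ M := by
    by_contra! hHM
    exact hp.ne_one (hM ▸ index_eq_one.mpr (top_le_iff.mp (hsup ▸ sup_le hHM hKM)))
  exact exists_noninner_mulAut_fixing_frattini hM hz hzp (hKM (z : K).2)
    (mem_center_of_sup_eq_top hHn hKn hdisj hsup hgH (hHab g hgH)) hgM

/-- A finite non-abelian p-group with a nontrivial abelian direct factor (and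
non-abelian complement) has a non-inner automorphism of order p fixing the
Frattini subgroup elementwise. -/
theorem noninner_aut_fixing_frattini_of_abelian_factor {p : ℕ} (hp : p.Prime)
    {G : Type*} [Group G] [Fintype G] (hpG : IsPGroup p G)
    (hG : ∃ a b : G, a * b ≠ b * a)
    (H K : Subgroup G) (hHn : H.Normal) (hKn : K.Normal)
    (hsup : H ⊔ K = ⊤) (hinf : H ⊓ K = ⊥)
    (hHnt : H ≠ ⊥) (hHab : ∀ a ∈ H, ∀ b ∈ H, a * b = b * a)
    (hKnab : ∃ a ∈ K, ∃ b ∈ K, a * b ≠ b * a) :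
    ∃ α : G ≃* G, orderOf α = p ∧ (¬ ∃ x : G, ∀ g : G, α g = x⁻¹ * g * x) ∧
      ∀ w ∈ frattini G, α w = w :=
  noninner_aut_fixing_frattini_of_abelian_factor_general hp hpG H K hHn hKn hsup hinf hHnt hHab
    hKnab
end

section
/- Let p be a prime and G a finite non-abelian p-group that is not purely non-abelian, i.e., G has a nontrivial abelian direct factor. Then G has a non-inner central automorphism of order p which fixes the Frattini subgroup Φ(G) elementwise. -/
/-- A finite non-abelian p-group that is not purely non-abelian has a
non-inner central automorphism of order p fixing Φ(G) elementwise. -/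
theorem noninner_central_aut_of_not_purely_nonabelian {p : ℕ} (hp : p.Prime)
    {G : Type*} [Group G] [Fintype G] (hpG : IsPGroup p G)
    (hG : ∃ a b : G, a * b ≠ b * a)
    (hfac : ∃ H K : Subgroup G, H.Normal ∧ K.Normal ∧ H ⊔ K = ⊤ ∧ H ⊓ K = ⊥ ∧
      H ≠ ⊥ ∧ ∀ a ∈ H, ∀ b ∈ H, a * b = b * a) :
    ∃ α : G ≃* G, (∀ g : G, g⁻¹ * α g ∈ Subgroup.center G) ∧
      orderOf α = p ∧ (¬ ∃ x : G, ∀ g : G, α g = x⁻¹ * g * x) ∧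
      ∀ w ∈ frattini G, α w = w := by
  classical
  obtain ⟨H, K, hHn, hKn, hsup, hinf, hHbot, hHab⟩ := hfac
  haveI : Fact p.Prime := ⟨hp⟩
  have hdisj : Disjoint H K := disjoint_iff.mpr hinf
  -- every element decomposes
  have hdecomp : ∀ g : G, ∃ h ∈ H, ∃ k ∈ K, h * k = g := by
    intro g
    have hg : g ∈ (↑(H ⊔ K) : Set G) := by rw [hsup]; trivial
    rw [Subgroup.mul_normal H K] at hg
    exact Set.mem_mul.mp hg
  -- H is central
  have hHcen : ∀ h ∈ H, ∀ g : G, Commute h g := by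
    intro h hh g
    obtain ⟨h', hh', k', hk', rfl⟩ := hdecomp g
    exact Commute.mul_right (hHab h hh h' hh')
      (Subgroup.commute_of_normal_of_disjoint H K hHn hKn hdisj h k' hh hk')
  -- an element z of order p in H
  haveI : Nontrivial H := (Subgroup.nontrivial_iff_ne_bot H).mpr hHbot
  have hpH : IsPGroup p H := hpG.to_subgroup H
  obtain ⟨n, hn⟩ := IsPGroup.iff_card.mp hpH
  have hn0 : n ≠ 0 := by
    rintro rfl
    simp only [pow_zero] at hn
    exact absurd hn (Finite.one_lt_card (α := H)).ne'
  obtain ⟨zz, hzz⟩ : ∃ zz : H, orderOf zz = p :=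
    exists_prime_orderOf_dvd_card' p (by rw [hn]; exact dvd_pow_self p hn0)
  set z : G := (zz : G) with hzdef
  have hz_ord : orderOf z = p := by
    have h1 := orderOf_injective H.subtype H.subtype_injective zz
    rw [hzdef]
    rw [← hzz]
    exact h1
  have hzH : z ∈ H := zz.2
  have hz1 : z ≠ 1 := by
    intro h
    rw [h, orderOf_one] at hz_ord
    exact hp.one_lt.ne hz_ord
  -- zpowers z is proper
  have hzprop : Subgroup.zpowers z ≠ ⊤ := by
    intro htop
    obtain ⟨a, b, hab⟩ := hG
    have ha : a ∈ Subgroup.zpowers z := htop ▸ Subgroup.mem_top a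
    have hb : b ∈ Subgroup.zpowers z := htop ▸ Subgroup.mem_top b
    obtain ⟨m, rfl⟩ := ha
    obtain ⟨k, rfl⟩ := hb
    exact hab (zpow_mul_comm z m k)
  -- a maximal subgroup containing z
  haveI : Finite (Subgroup G) :=
    Finite.of_injective (fun S : Subgroup G => (S : Set G)) fun _ _ h => SetLike.ext' h
  obtain hM | ⟨M, hM, hzM⟩ := (Finite.to_isCoatomic (α := Subgroup G)).eq_top_or_exists_le_coatom
    (Subgroup.zpowers z)
  · exact absurd hM hzprop
  haveI : Group.IsNilpotent G := hpG.isNilpotent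
  haveI hMnorm : M.Normal :=
    Subgroup.NormalizerCondition.normal_of_coatom M
      (normalizerCondition_of_isNilpotent (G := G)) hM
  set π : G →* G ⧸ M := QuotientGroup.mk' M with hπ
  -- element g₀ outside M
  obtain ⟨g₀, hg₀⟩ : ∃ g₀ : G, g₀ ∉ M := by
    by_contra hc
    push_neg at hc
    exact hM.1 ((Subgroup.eq_top_iff' M).mpr hc)
  have hπg₀ : π g₀ ≠ 1 := fun h => hg₀ ((QuotientGroup.eq_one_iff g₀).mp h)
  haveI : Nontrivial (G ⧸ M) := ⟨π g₀, 1, hπg₀⟩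
  have hpQ : IsPGroup p (G ⧸ M) := hpG.to_quotient M
  obtain ⟨m, hm⟩ := IsPGroup.iff_card.mp hpQ
  have hm0 : m ≠ 0 := by
    rintro rfl
    simp only [pow_zero] at hm
    exact absurd hm (Finite.one_lt_card (α := G ⧸ M)).ne'
  obtain ⟨x, hx⟩ : ∃ x : G ⧸ M, orderOf x = p :=
    exists_prime_orderOf_dvd_card' p (by rw [hm]; exact dvd_pow_self p hm0)
  -- x generates the quotient
  have hxtop : Subgroup.zpowers x = ⊤ := by
    have hle : M ≤ (Subgroup.zpowers x).comap π := by
      intro a ha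
      have h1 : π a = 1 := (QuotientGroup.eq_one_iff a).mpr ha
      rw [Subgroup.mem_comap, h1]
      exact Subgroup.one_mem _
    obtain ⟨g₁, hg₁⟩ := QuotientGroup.mk'_surjective M x
    have hne : M ≠ (Subgroup.zpowers x).comap π := by
      intro heq
      have : g₁ ∈ M := by
        rw [heq, Subgroup.mem_comap]
        show QuotientGroup.mk' M g₁ ∈ Subgroup.zpowers x
        rw [hg₁]
        exact Subgroup.mem_zpowers x
      have : π g₁ = 1 := (QuotientGroup.eq_one_iff g₁).mpr this
      rw [hg₁] at this
      rw [this, orderOf_one] at hx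
      exact hp.one_lt.ne hx
    have htop : (Subgroup.zpowers x).comap π = ⊤ := hM.2 _ (lt_of_le_of_ne hle hne)
    have := Subgroup.map_comap_eq_self_of_surjective
      (QuotientGroup.mk'_surjective M) (Subgroup.zpowers x)
    rw [htop, Subgroup.map_top_of_surjective _ (QuotientGroup.mk'_surjective M)] at this
    exact this.symm
  -- cyclic groups of order p
  have hcardQ : Nat.card (G ⧸ M) = p := by
    have h1 : Nat.card (Subgroup.zpowers x) = p := by rw [Nat.card_zpowers, hx]
    rw [hxtop] at h1
    rwa [Subgroup.card_top] at h1
  have hcardz : Nat.card (Subgroup.zpowers z) = p := by rw [Nat.card_zpowers, hz_ord]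
  haveI hQcyc : IsCyclic (G ⧸ M) := isCyclic_of_prime_card (p := p) hcardQ
  haveI hzcyc : IsCyclic (Subgroup.zpowers z) := isCyclic_of_prime_card (p := p) hcardz
  -- the homomorphism f
  set e : (G ⧸ M) ≃* Subgroup.zpowers z :=
    mulEquivOfCyclicCardEq (hcardQ.trans hcardz.symm) with he
  set f : G →* G := ((Subgroup.zpowers z).subtype.comp e.toMonoidHom).comp π with hf
  have hfz : ∀ g : G, f g ∈ Subgroup.zpowers z := fun g => (e (π g)).2
  have hzle : Subgroup.zpowers z ≤ H := (Subgroup.zpowers_le).mpr hzH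
  have hfH : ∀ g : G, f g ∈ H := fun g => hzle (hfz g)
  have hfcen : ∀ g u : G, Commute (f g) u := fun g u => hHcen _ (hfH g) u
  have hfone : ∀ g : G, f g = 1 ↔ g ∈ M := by
    intro g
    rw [hf]
    simp only [MonoidHom.comp_apply, Subgroup.coe_subtype, OneMemClass.coe_eq_one]
    show e (π g) = 1 ↔ g ∈ M
    rw [EmbeddingLike.map_eq_one_iff]
    exact QuotientGroup.eq_one_iff g
  have hff : ∀ g : G, f (f g) = 1 := by
    intro g
    rw [hfone]
    exact hzM (hfz g)
  have hfp : ∀ g : G, (f g) ^ p = 1 := by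
    intro g
    obtain ⟨k, hk⟩ := hfz g
    rw [← hk, ← zpow_natCast, ← zpow_mul, mul_comm, zpow_mul, zpow_natCast,
      ← hz_ord, pow_orderOf_eq_one, one_zpow]
  -- the automorphism
  set α : G ≃* G :=
    { toFun := fun g => g * f g
      invFun := fun g => g * (f g)⁻¹
      left_inv := by
        intro g
        simp only [map_mul, hff g, mul_one]
        group
      right_inv := by
        intro g
        simp only [map_mul, map_inv, hff g, inv_one, mul_one]
        group
      map_mul' := by
        intro a b
        simp only [map_mul]
        have := (hfcen a b).symm
        calc a * b * (f a * f b) = a * (b * f a) * f b := by group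
          _ = a * (f a * b) * f b := by rw [this.eq]
          _ = a * f a * (b * f b) := by group } with hα
  have hαapp : ∀ g : G, α g = g * f g := fun g => rfl
  refine ⟨α, ?_, ?_, ?_, ?_⟩
  · intro g
    rw [hαapp, Subgroup.mem_center_iff]
    intro u
    have h1 : g⁻¹ * (g * f g) = f g := by group
    rw [h1]
    exact (hfcen g u).symm
  · -- order p
    have hpow : ∀ (n : ℕ) (g : G), (α ^ n) g = g * (f g) ^ n := by
      intro n
      induction n with
      | zero => intro g; rw [pow_zero, pow_zero, mul_one]; rfl
      | succ k ih =>
        intro g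
        rw [pow_succ]
        have h1 : (α ^ k * α) g = (α ^ k) (α g) := rfl
        rw [h1, hαapp, ih, map_mul, hff, mul_one, mul_assoc, ← pow_succ']
    have hαp : α ^ p = 1 := by
      apply MulEquiv.ext
      intro g
      rw [hpow p g, hfp g, mul_one]
      rfl
    have hα1 : α ≠ 1 := by
      intro h
      have h2 : g₀ * f g₀ = g₀ := by
        rw [← hαapp g₀, h]; rfl
      have h3 : f g₀ = 1 := by
        apply mul_left_cancel (a := g₀)
        rw [mul_one, h2]
      exact hg₀ ((hfone g₀).mp h3)
    exact orderOf_eq_prime hαp hα1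
  · -- non-inner
    rintro ⟨t, ht⟩
    have hft : f g₀ = g₀⁻¹ * t⁻¹ * g₀ * t := by
      have := ht g₀
      rw [hαapp] at this
      calc f g₀ = g₀⁻¹ * (g₀ * f g₀) := by group
        _ = g₀⁻¹ * (t⁻¹ * g₀ * t) := by rw [this]
        _ = g₀⁻¹ * t⁻¹ * g₀ * t := by group
    -- the commutator lies in K
    obtain ⟨h, hh, k, hk, hhk⟩ := hdecomp g₀
    have hKmem : g₀⁻¹ * t⁻¹ * g₀ * t ∈ K := by
      have hcomm : ∀ u : G, h * u = u * h := fun u => hHcen h hh u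
      have key : g₀⁻¹ * t⁻¹ * g₀ * t = k⁻¹ * (t⁻¹ * k * t) := by
        rw [← hhk]
        calc (h * k)⁻¹ * t⁻¹ * (h * k) * t
            = k⁻¹ * h⁻¹ * t⁻¹ * (h * k) * t := by group
          _ = k⁻¹ * h⁻¹ * (t⁻¹ * h) * k * t := by group
          _ = k⁻¹ * h⁻¹ * (h * t⁻¹) * k * t := by rw [← hcomm t⁻¹]
          _ = k⁻¹ * (t⁻¹ * k * t) := by group
      rw [key]
      exact K.mul_mem (K.inv_mem hk) (hKn.conj_mem' k hk t)
    rw [← hft] at hKmem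
    have : f g₀ ∈ H ⊓ K := ⟨hfH g₀, hKmem⟩
    rw [hinf, Subgroup.mem_bot] at this
    exact hg₀ ((hfone g₀).mp this)
  · -- fixes Frattini
    intro w hw
    have hwM : w ∈ M := frattini_le_coatom hM hw
    rw [hαapp, (hfone w).mpr hwM, mul_one]
end

section
/- Let p be a prime, G = H × K an internal direct product of normal subgroups with H abelian, let M be a subgroup of H and h ∈ H with H = M⟨h⟩ and h ∉ M, and let g ∈ Z(K) with g^p = 1. Then the map α sending m·hⁱ·k ↦ m·hⁱ·k·gⁱ (for m ∈ M, k ∈ K, 0 ≤ i ≤ p−1) is a well-defined automorphism of G satisfying α^p = id, provided h has order divisible by p modulo M. -/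
open scoped Pointwise


/-- The map m·hⁱ·k ↦ m·hⁱ·k·gⁱ is a well-defined automorphism of G with
α^p = id, where G = H × K, H abelian, H = M⟨h⟩ with h ∉ M, g ∈ Z(K) with
g^p = 1, and the order of h modulo M is divisible by p. -/
theorem aut_of_direct_product {p : ℕ} (hp : p.Prime)
    {G : Type*} [Group G] [Fintype G] (hpG : IsPGroup p G)
    (H K : Subgroup G) (hHn : H.Normal) (hKn : K.Normal)
    (hsup : H ⊔ K = ⊤) (hinf : H ⊓ K = ⊥)
    (hHab : ∀ a ∈ H, ∀ b ∈ H, a * b = b * a)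
    (M : Subgroup G) (hMH : M ≤ H) (h : G) (hhH : h ∈ H) (hhM : h ∉ M)
    (hgen : H = M ⊔ Subgroup.closure {h})
    (hord : ∀ i : ℕ, 0 < i → h ^ i ∈ M → p ∣ i)
    (g : G) (hgK : g ∈ Subgroup.centralizer (K : Set G) ⊓ K) (hgp : g ^ p = 1) :
    ∃ α : G ≃* G, α ^ p = 1 ∧
      ∀ (m k : G) (i : ℕ), m ∈ M → k ∈ K → i ≤ p - 1 →
        α (m * h ^ i * k) = m * h ^ i * k * g ^ i := by
  classical
  haveI : Fact p.Prime := ⟨hp⟩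
  have hdis : Disjoint H K := disjoint_iff.mpr hinf
  have hcomm : ∀ a ∈ H, ∀ k ∈ K, Commute a k := fun a ha k hk =>
    Subgroup.commute_of_normal_of_disjoint H K hHn hKn hdis a k ha hk
  -- every element of H is central in G
  have hHc : ∀ a ∈ H, ∀ x : G, Commute x a := by
    intro a ha x
    have hle : H ⊔ K ≤ Subgroup.centralizer {a} := by
      refine sup_le (fun b hb => ?_) (fun k hk => ?_)
      · exact Subgroup.mem_centralizer_iff.mpr (by simpa using hHab a ha b hb)
      · exact Subgroup.mem_centralizer_iff.mpr
          (by simpa using (hcomm a ha k hk).eq)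
    have : x ∈ Subgroup.centralizer {a} := hle (by rw [hsup]; trivial)
    simpa [Commute, SemiconjBy] using (Subgroup.mem_centralizer_iff.mp this a rfl).symm
  have hgH : g ∈ K := hgK.2
  -- g is central in G
  have hgc : ∀ x : G, Commute x g := by
    intro x
    have hle : H ⊔ K ≤ Subgroup.centralizer {g} := by
      refine sup_le (fun b hb => ?_) (fun k hk => ?_)
      · exact Subgroup.mem_centralizer_iff.mpr (by simpa using (hcomm b hb g hgH).symm.eq)
      · exact Subgroup.mem_centralizer_iff.mpr
          (by simpa using (Subgroup.mem_centralizer_iff.mp hgK.1 k hk).symm)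
    have : x ∈ Subgroup.centralizer {g} := hle (by rw [hsup]; trivial)
    simpa [Commute, SemiconjBy] using (Subgroup.mem_centralizer_iff.mp this g rfl).symm
  -- normality from centrality
  have normal_of_le_H : ∀ S : Subgroup G, S ≤ H → S.Normal := by
    intro S hS
    refine ⟨fun n hn x => ?_⟩
    have : x * n * x⁻¹ = n := by
      rw [(hHc n (hS hn) x).eq, mul_inv_cancel_right]
    rwa [this]
  set Z : Subgroup G := Subgroup.zpowers (h ^ p) with hZ
  have hZH : Z ≤ H := by
    rintro _ ⟨z, rfl⟩
    exact Subgroup.zpow_mem H (Subgroup.pow_mem H hhH p) z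
  haveI hMn : M.Normal := normal_of_le_H M hMH
  haveI hZn : Z.Normal := normal_of_le_H Z hZH
  haveI := hKn
  haveI hZh : (Subgroup.zpowers h).Normal :=
    normal_of_le_H _ (by rintro _ ⟨z, rfl⟩; exact Subgroup.zpow_mem H hhH z)
  set N : Subgroup G := M ⊔ Z ⊔ K with hN
  haveI hNn : N.Normal := Subgroup.sup_normal _ _
  -- integer version of hord
  have hordZ : ∀ z : ℤ, h ^ z ∈ M → (p : ℤ) ∣ z := by
    intro z hz
    rcases eq_or_ne z 0 with rfl | hz0
    · exact dvd_zero _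
    have habs : h ^ (z.natAbs) ∈ M := by
      rcases Int.natAbs_eq z with hzz | hzz
      · rw [← zpow_natCast, ← hzz]; exact hz
      · rw [← zpow_natCast]
        have : h ^ (z.natAbs : ℤ) = (h ^ z)⁻¹ := by
          rw [← zpow_neg]; congr 1; omega
        rw [this]; exact M.inv_mem hz
    have := hord z.natAbs (by omega) habs
    exact Int.dvd_natAbs.mp (Int.natCast_dvd_natCast.mpr this)
  -- h ∉ N
  have hhN : h ∉ N := by
    intro hmem
    rw [hN] at hmem
    have h1 : (h : G) ∈ ((M : Set G) * (Z : Set G) * (K : Set G)) := by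
      rw [← Subgroup.mul_normal M Z, ← Subgroup.mul_normal (M ⊔ Z) K]
      exact hmem
    obtain ⟨a, ha, k, hk, hak0⟩ := h1
    have hak : a * k = h := hak0
    obtain ⟨m, hm, c, hc, hmc0⟩ := ha
    have hmc : m * c = a := hmc0
    obtain ⟨z, hz⟩ := hc
    have hkH : k ∈ H := by
      have : k = (m * c)⁻¹ * h := by rw [← hak, hmc]; group
      rw [this]
      exact H.mul_mem (H.inv_mem (H.mul_mem (hMH hm) (hZH (hz ▸ Subgroup.zpow_mem Z (Subgroup.mem_zpowers _) z)))) hhH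
    have hk1 : k = 1 := by
      have : k ∈ H ⊓ K := ⟨hkH, hk⟩
      rwa [hinf, Subgroup.mem_bot] at this
    have hm' : h ^ (1 - (p : ℤ) * z) ∈ M := by
      have hz' : (h ^ p) ^ z = c := hz
      have hh : h = m * (h ^ p) ^ z := by rw [hz', hmc, ← hak, hk1, mul_one]
      have e1 : h ^ (1 - (p : ℤ) * z) = h * (h ^ ((p : ℤ) * z))⁻¹ := by
        rw [zpow_sub, zpow_one]
      have e2 : h ^ ((p : ℤ) * z) = (h ^ p) ^ z := by
        rw [zpow_mul, zpow_natCast]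
      have e3 : h ^ (1 - (p : ℤ) * z) = m := by
        rw [e1, e2]
        nth_rewrite 1 [hh]
        rw [mul_inv_cancel_right]
      rw [e3]; exact hm
    have hdvd1 : (p : ℤ) ∣ 1 - (p : ℤ) * z := hordZ _ hm'
    have : (p : ℤ) ∣ 1 := by
      have h2 : (p : ℤ) ∣ (p : ℤ) * z := Dvd.intro z rfl
      simpa using dvd_add hdvd1 h2
    have := Int.le_of_dvd one_pos this
    have := hp.two_le
    omega
  -- the quotient
  set Q := G ⧸ N with hQ
  set t : Q := QuotientGroup.mk h with ht
  have htp : t ^ p = 1 := by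
    rw [ht, ← QuotientGroup.mk_pow, QuotientGroup.eq_one_iff]
    exact Subgroup.mem_sup_left (Subgroup.mem_sup_right (Subgroup.mem_zpowers _))
  have ht1 : t ≠ 1 := by
    rw [ht, Ne, QuotientGroup.eq_one_iff]; exact hhN
  have hordt : orderOf t = p := orderOf_eq_prime htp ht1
  -- generation
  have hMN : M ≤ N := le_trans le_sup_left le_sup_left
  have hKN : K ≤ N := le_sup_right
  have hgenQ : ∀ q : Q, ∃ n : ℕ, t ^ n = q := by
    intro q
    obtain ⟨x, rfl⟩ := QuotientGroup.mk_surjective q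
    have hx : x ∈ ((H : Set G) * (K : Set G)) := by
      rw [← Subgroup.mul_normal H K, hsup]; trivial
    obtain ⟨a, haH, k, hk, hak0⟩ := hx
    have hak : a * k = x := hak0
    have ha2 : a ∈ ((M : Set G) * (Subgroup.zpowers h : Set G)) := by
      rw [← Subgroup.mul_normal M (Subgroup.zpowers h), Subgroup.zpowers_eq_closure, ← hgen]
      exact haH
    obtain ⟨m, hm, c, hc, hmc0⟩ := ha2
    have hmc : m * c = a := hmc0
    obtain ⟨z, hz⟩ := hc
    have hz' : h ^ z = c := hz
    have hxq : (QuotientGroup.mk x : Q) = t ^ z := by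
      rw [← hak, ← hmc, ← hz']
      rw [QuotientGroup.mk_mul, QuotientGroup.mk_mul, QuotientGroup.mk_zpow]
      rw [(QuotientGroup.eq_one_iff m).mpr (hMN hm), (QuotientGroup.eq_one_iff k).mpr (hKN hk)]
      rw [one_mul, mul_one, ht]
    refine ⟨(z % (p : ℤ)).toNat, ?_⟩
    have hzmod : t ^ (z % (p : ℤ)) = t ^ z := by
      conv_rhs => rw [← zpow_mod_orderOf]
      rw [hordt]
    rw [← zpow_natCast, Int.toNat_of_nonneg (Int.emod_nonneg z (by exact_mod_cast hp.ne_zero)), hzmod, hxq]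
  -- the discrete log
  set L : Q → ℕ := fun q => (hgenQ q).choose with hL
  have hLs : ∀ q : Q, t ^ L q = q := fun q => (hgenQ q).choose_spec
  have transfer : ∀ a b : ℕ, t ^ a = t ^ b → g ^ a = g ^ b := by
    intro a b hab
    have h1 : a ≡ b [MOD p] := by rw [← hordt]; exact pow_eq_pow_iff_modEq.mp hab
    have h2 : orderOf g ∣ p := orderOf_dvd_of_pow_eq_one hgp
    exact pow_eq_pow_iff_modEq.mpr (h1.of_dvd h2)
  -- the twisting homomorphism
  have hpsi_mul : ∀ x y : G, g ^ L (QuotientGroup.mk (x * y)) =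
      g ^ L (QuotientGroup.mk x : Q) * g ^ L (QuotientGroup.mk y : Q) := by
    intro x y
    rw [← pow_add]
    refine transfer _ _ ?_
    rw [pow_add, hLs, hLs, hLs, QuotientGroup.mk_mul]
  set Ψ : G →* G := MonoidHom.mk' (fun x => g ^ L (QuotientGroup.mk x : Q)) hpsi_mul with hΨ
  have hΨN : ∀ x ∈ N, Ψ x = 1 := by
    intro x hx
    have h1 : (QuotientGroup.mk x : Q) = 1 := (QuotientGroup.eq_one_iff x).mpr hx
    have : g ^ L (QuotientGroup.mk x : Q) = g ^ 0 := by
      refine transfer _ _ ?_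
      rw [hLs, h1, pow_zero]
    simpa [hΨ] using this
  have hΨh : Ψ h = g := by
    have : g ^ L (t) = g ^ 1 := by
      refine transfer _ _ ?_
      rw [hLs, pow_one]
    simpa [hΨ, ht] using this
  have hΨmem : ∀ x : G, Ψ x ∈ N := fun x => N.pow_mem (hKN hgH) _
  have hΨc : ∀ x y : G, Commute y (Ψ x) := fun x y => (hgc y).pow_right _
  have hΨord : ∀ x : G, (Ψ x) ^ p = 1 := by
    intro x
    show (g ^ _) ^ p = 1
    rw [← pow_mul, mul_comm, pow_mul, hgp, one_pow]
  have hΨabsorb : ∀ x y : G, y ∈ N → Ψ (x * y) = Ψ x := by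
    intro x y hy
    rw [map_mul, hΨN y hy, mul_one]
  have hmapmul : ∀ x y : G, x * y * Ψ (x * y) = (x * Ψ x) * (y * Ψ y) := by
    intro x y
    rw [map_mul]
    calc x * y * (Ψ x * Ψ y) = x * (y * Ψ x) * Ψ y := by group
      _ = x * (Ψ x * y) * Ψ y := by rw [(hΨc x y).eq]
      _ = (x * Ψ x) * (y * Ψ y) := by group
  set α : G ≃* G :=
    { toFun := fun x => x * Ψ x
      invFun := fun x => x * (Ψ x)⁻¹
      left_inv := by
        intro x
        simp only
        rw [hΨabsorb x (Ψ x) (hΨmem x), mul_inv_cancel_right]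
      right_inv := by
        intro x
        simp only
        rw [hΨabsorb x (Ψ x)⁻¹ (N.inv_mem (hΨmem x)), inv_mul_cancel_right]
      map_mul' := hmapmul } with hα
  have hαapp : ∀ x : G, α x = x * Ψ x := fun x => rfl
  have key : ∀ (n : ℕ) (x : G), (α ^ n) x = x * (Ψ x) ^ n := by
    intro n
    induction n with
    | zero => intro x; simp
    | succ n ih =>
      intro x
      rw [pow_succ, MulAut.mul_apply, hαapp, ih, hΨabsorb x (Ψ x) (hΨmem x),
        mul_assoc, ← pow_succ']
  refine ⟨α, ?_, ?_⟩
  · exact MulEquiv.ext fun x => by rw [key p x, hΨord, mul_one]; rfl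
  · intro m k i hm hk _
    rw [hαapp]
    congr 1
    rw [map_mul, map_mul, map_pow, hΨh, hΨN m (hMN hm), hΨN k (hKN hk), one_mul, mul_one]
end

section
/- Let G be a finite non-abelian p-group, G = H₁ × H₂ × ⋯ × Hₙ an internal direct product of normal subgroups where H₁ is abelian and nontrivial and each Hᵢ for i ≥ 2 is non-abelian. Then G has a non-inner central automorphism of order p fixing Φ(G) elementwise. -/
/-!
Every element of the abelian factor `H₁` is central, and a maximal subgroup `M` containing
`H₂ ⋯ Hₙ` cannot contain `H₁`, so `Z(G) ⊄ M`. In a `p`-group `M` is normal of index `p`, and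
being a nontrivial normal subgroup it contains a central element `z` of order `p`. Identifying
`G ⧸ M` with `⟨z⟩` gives `χ : G →* G` with kernel `M` and central image inside `M`, so
`g ↦ g * χ g` is a central automorphism of order `p` fixing `M ⊇ Φ(G)` pointwise. It moves the
central elements outside `M`, which no inner automorphism does.
-/

open Subgroup

section CentralAut

variable {G : Type*} [Group G] (χ : G →* G) (hχ : ∀ g, χ g ∈ center G)
  (hχχ : ∀ g, χ (χ g) = 1)

def centralAutOfHom : G ≃* G where
  toFun g := g * χ g
  invFun g := g * (χ g)⁻¹
  left_inv g := by simp [hχχ]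
  right_inv g := by simp [hχχ]
  map_mul' g h := by
    have hc : χ g * h = h * χ g := (mem_center_iff.mp (hχ g) h).symm
    simp only [map_mul]
    rw [mul_assoc g (χ g), ← mul_assoc (χ g), hc]
    simp only [mul_assoc]

@[simp]
lemma centralAutOfHom_apply (g : G) : centralAutOfHom χ hχ hχχ g = g * χ g := rfl

lemma centralAutOfHom_pow_apply (k : ℕ) (g : G) :
    (centralAutOfHom χ hχ hχχ ^ k) g = g * χ g ^ k := by
  induction k generalizing g with
  | zero => simp
  | succ k ih => rw [pow_succ, MulAut.mul_apply, ih]; simp [hχχ, pow_succ', mul_assoc]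

lemma orderOf_centralAutOfHom {p : ℕ} [Fact p.Prime] (hpow : ∀ g, χ g ^ p = 1) (hne : χ ≠ 1) :
    orderOf (centralAutOfHom χ hχ hχχ) = p := by
  refine orderOf_eq_prime (MulEquiv.ext fun g => ?_) fun h => hne (MonoidHom.ext fun g => ?_)
  · simp [centralAutOfHom_pow_apply, hpow]
  · simpa using DFunLike.congr_fun h g

end CentralAut

lemma not_exists_conj_of_apply_ne {G : Type*} [Group G] {α : G ≃* G} {h : G}
    (hh : h ∈ center G) (hαh : α h ≠ h) : ¬ ∃ x : G, ∀ g, α g = x⁻¹ * g * x := by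
  rintro ⟨x, hx⟩
  rw [hx, mul_assoc, ← (mem_center_iff.mp hh x), inv_mul_cancel_left] at hαh
  exact hαh rfl

namespace IsPGroup

variable {p : ℕ} [Fact p.Prime] {G : Type*} [Group G]

lemma prime_dvd_card_of_ne_bot (hG : IsPGroup p G) {K : Subgroup G} (hK : K ≠ ⊥) :
    p ∣ Nat.card K :=
  (hG.to_subgroup K).card_eq_or_dvd.resolve_left (card_eq_one.not.mpr hK)

variable [Finite G]

lemma index_eq_of_isCoatom (hG : IsPGroup p G) {M : Subgroup G} (hM : IsCoatom M) :
    M.index = p := by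
  obtain ⟨k, hk⟩ := (hG.to_subgroup M).exists_card_eq
  obtain ⟨j, hj⟩ := hG.index M
  have hj0 : j ≠ 0 := by
    rintro rfl
    exact hM.1 (index_eq_one.mp (by simpa using hj))
  have hdvd : p ^ (k + 1) ∣ Nat.card G := by
    rw [← M.card_mul_index, hk, hj, pow_succ]
    exact mul_dvd_mul_left _ (dvd_pow_self p hj0)
  -- a subgroup of order `p * |M|` above `M` must be all of `G`
  obtain ⟨K, hK, hMK⟩ := Sylow.exists_subgroup_card_pow_succ hdvd hk
  have hKtop : K = ⊤ := hM.2 K <| hMK.lt_of_ne fun h => by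
    subst h
    exact (Nat.pow_right_injective (Fact.out : p.Prime).two_le).ne (Nat.succ_ne_self k)
      (hK.symm.trans hk)
  have := M.card_mul_index
  rw [← card_top (G := G), ← hKtop, hK, hk, pow_succ] at this
  exact Nat.eq_of_mul_eq_mul_left (pow_pos (Fact.out : p.Prime).pos k) this

lemma inf_center_ne_bot (hG : IsPGroup p G) {N : Subgroup G} [N.Normal] (hN : N ≠ ⊥) :
    N ⊓ center G ≠ ⊥ := by
  have hGc : IsPGroup p (ConjAct G) := hG.of_equiv ConjAct.toConjAct
  obtain ⟨b, hb, hb1⟩ := hGc.exists_fixed_point_of_prime_dvd_card_of_fixed_point N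
    (hG.prime_dvd_card_of_ne_bot hN) (a := 1) fun g => smul_one g
  refine ne_bot_iff_exists_ne_one.mpr ⟨⟨b, b.2, mem_center_iff.mpr fun g => ?_⟩, ?_⟩
  · have := congrArg Subtype.val (hb (ConjAct.toConjAct g))
    rw [ConjAct.Subgroup.val_conj_smul, ConjAct.smul_def, ConjAct.ofConjAct_toConjAct] at this
    exact mul_inv_eq_iff_eq_mul.mp this
  · exact fun h => hb1 (Subtype.ext (congrArg Subtype.val h).symm)

end IsPGroup

lemma exists_monoidHom_ker_eq_of_index_eq {p : ℕ} [Fact p.Prime] {G : Type*} [Group G]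
    {M : Subgroup G} [M.Normal] (hM : M.index = p) {z : G} (hz : orderOf z = p) :
    ∃ χ : G →* G, (∀ g, χ g ∈ zpowers z) ∧ χ.ker = M := by
  let e : G ⧸ M ≃* zpowers z := mulEquivOfPrimeCardEq hM (by rw [Nat.card_zpowers, hz])
  refine ⟨(zpowers z).subtype.comp (e.toMonoidHom.comp (QuotientGroup.mk' M)),
    fun g => (e _).2, ?_⟩
  rw [MonoidHom.ker_comp_of_injective _ _ (subtype_injective _),
    MonoidHom.ker_comp_of_injective _ _ e.injective, QuotientGroup.ker_mk']

theorem IsPGroup.exists_noninner_centralAut_of_not_center_le {p : ℕ} [Fact p.Prime]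
    {G : Type*} [Group G] [Finite G] (hG : IsPGroup p G) (hnc : ∃ a b : G, a * b ≠ b * a)
    {M : Subgroup G} (hM : IsCoatom M) (hZM : ¬ center G ≤ M) :
    ∃ α : G ≃* G, (∀ g : G, g⁻¹ * α g ∈ center G) ∧ orderOf α = p ∧
      (¬ ∃ x : G, ∀ g : G, α g = x⁻¹ * g * x) ∧ ∀ w ∈ M, α w = w := by
  have : Group.IsNilpotent G := hG.isNilpotent
  have : M.Normal :=
    NormalizerCondition.normal_of_coatom M Group.normalizerCondition_of_isNilpotent hM
  have hM₀ : M ≠ ⊥ := by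
    rintro rfl
    obtain ⟨a, b, hab⟩ := hnc
    have : IsCyclic G :=
      isCyclic_of_prime_card (index_bot.symm.trans (hG.index_eq_of_isCoatom hM))
    exact hab (IsMulCommutative.is_comm.comm a b)
  obtain ⟨z, hz⟩ := exists_prime_orderOf_dvd_card' p
    (hG.prime_dvd_card_of_ne_bot (hG.inf_center_ne_bot hM₀))
  obtain ⟨χ, hχz, hχker⟩ := exists_monoidHom_ker_eq_of_index_eq (hG.index_eq_of_isCoatom hM)
    (z := z) (by rw [orderOf_coe, hz])
  have hχc : ∀ g, χ g ∈ center G := fun g => zpowers_le.mpr z.2.2 (hχz g)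
  have hχχ : ∀ g, χ (χ g) = 1 := fun g => by
    rw [← MonoidHom.mem_ker, hχker]; exact zpowers_le.mpr z.2.1 (hχz g)
  have hpow : ∀ g, χ g ^ p = 1 := fun g => by
    rw [← orderOf_dvd_iff_pow_eq_one, ← hz, ← orderOf_coe]
    exact orderOf_dvd_of_mem_zpowers (hχz g)
  obtain ⟨h, hh, hhM⟩ := SetLike.not_le_iff_exists.mp hZM
  have hχh : χ h ≠ 1 := fun h1 => hhM (hχker ▸ MonoidHom.mem_ker.mpr h1)
  refine ⟨centralAutOfHom χ hχc hχχ, fun g => by simpa using hχc g,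
    orderOf_centralAutOfHom χ hχc hχχ hpow fun h1 => hχh (by simp [h1]),
    not_exists_conj_of_apply_ne hh (by simpa using hχh), fun w hw => ?_⟩
  rw [← hχker] at hw
  simp [MonoidHom.mem_ker.mp hw]

lemma mem_center_of_iSupIndep {G ι : Type*} [Group G] {H : ι → Subgroup G}
    (hnorm : ∀ i, (H i).Normal) (hsup : ⨆ i, H i = ⊤) (hind : iSupIndep H) {i : ι} {x : G}
    (hx : x ∈ H i) (hcomm : ∀ y ∈ H i, x * y = y * x) : x ∈ center G := by
  suffices ⊤ ≤ centralizer {x} from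
    mem_center_iff.mpr fun g => mem_centralizer_singleton_iff.mp (this (mem_top g))
  rw [← hsup]
  refine iSup_le fun j y hy => mem_centralizer_singleton_iff.mpr ?_
  by_cases hji : j = i
  · subst hji
    exact (hcomm y hy).symm
  · exact (commute_of_normal_of_disjoint _ _ (hnorm i) (hnorm j)
      (hind.pairwiseDisjoint (Ne.symm hji)) x y hx hy).eq.symm

theorem noninner_central_aut_of_multi_factor_general {p : ℕ} (hp : p.Prime)
    {G : Type*} [Group G] [Fintype G] (hpG : IsPGroup p G)
    (hG : ∃ a b : G, a * b ≠ b * a)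
    (n : ℕ) (hn : 0 < n) (H : Fin n → Subgroup G)
    (hnorm : ∀ i, (H i).Normal)
    (hsup : ⨆ i, H i = ⊤) (hind : iSupIndep H)
    (hH1nt : H ⟨0, hn⟩ ≠ ⊥)
    (hH1ab : ∀ a ∈ H ⟨0, hn⟩, ∀ b ∈ H ⟨0, hn⟩, a * b = b * a) :
    ∃ α : G ≃* G, (∀ g : G, g⁻¹ * α g ∈ Subgroup.center G) ∧
      orderOf α = p ∧ (¬ ∃ x : G, ∀ g : G, α g = x⁻¹ * g * x) ∧
      ∀ w ∈ frattini G, α w = w := by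
  have : Fact p.Prime := ⟨hp⟩
  set N := ⨆ (j) (_ : j ≠ ⟨0, hn⟩), H j
  have hH₀N : H ⟨0, hn⟩ ⊔ N = ⊤ := by rw [← iSup_split_single, hsup]
  have hNtop : N ≠ ⊤ := fun h =>
    hH1nt ((hind ⟨0, hn⟩).eq_bot_of_le (le_top.trans_eq h.symm))
  obtain ⟨M, hM, hNM⟩ := (eq_top_or_exists_le_coatom N).resolve_left hNtop
  have hH₀Z : H ⟨0, hn⟩ ≤ center G := fun a ha =>
    mem_center_of_iSupIndep hnorm hsup hind ha (hH1ab a ha)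
  have hZM : ¬ center G ≤ M := fun hZM =>
    hM.1 (top_le_iff.mp (hH₀N ▸ sup_le (hH₀Z.trans hZM) hNM))
  obtain ⟨α, hcent, hord, hinner, hfix⟩ :=
    hpG.exists_noninner_centralAut_of_not_center_le hG hM hZM
  exact ⟨α, hcent, hord, hinner, fun w hw => hfix w (frattini_le_coatom hM hw)⟩

/-- A finite non-abelian p-group that is an internal direct product
H₁ × ⋯ × Hₙ with H₁ nontrivial abelian and each Hᵢ (i ≥ 2) non-abelian has a
non-inner central automorphism of order p fixing Φ(G) elementwise. -/
theorem noninner_central_aut_of_multi_factor {p : ℕ} (hp : p.Prime)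
    {G : Type*} [Group G] [Fintype G] (hpG : IsPGroup p G)
    (hG : ∃ a b : G, a * b ≠ b * a)
    (n : ℕ) (hn : 0 < n) (H : Fin n → Subgroup G)
    (hnorm : ∀ i, (H i).Normal)
    (hsup : ⨆ i, H i = ⊤) (hind : iSupIndep H)
    (hH1nt : H ⟨0, hn⟩ ≠ ⊥)
    (hH1ab : ∀ a ∈ H ⟨0, hn⟩, ∀ b ∈ H ⟨0, hn⟩, a * b = b * a)
    (hHinab : ∀ i : Fin n, i ≠ ⟨0, hn⟩ → ∃ a ∈ H i, ∃ b ∈ H i, a * b ≠ b * a) :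
    ∃ α : G ≃* G, (∀ g : G, g⁻¹ * α g ∈ Subgroup.center G) ∧
      orderOf α = p ∧ (¬ ∃ x : G, ∀ g : G, α g = x⁻¹ * g * x) ∧
      ∀ w ∈ frattini G, α w = w :=
  noninner_central_aut_of_multi_factor_general hp hpG hG n hn H hnorm hsup hind hH1nt hH1ab
end
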